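/- arXiv:math/9501233 — 2 statements merged into one kernel-verified Lean document; each statement's English description precedes it below -/
import Mathlib

section
/- Ant dynamics on ZMod n: define the ant configuration as (position p ∈ ℤ×ℤ, direction d ∈ four unit vectors, state function σ : ℤ×ℤ → ZMod n). One step: the ant turns left if s(σ(p)) = true else right, increments σ(p) by 1, and moves one step in the new direction. Then for every initial configuration with σ finitely supported relative to a constant and n ≥ 2 with s non-constant, the set of cells visited by the ant is infinite. -/
/-- One step of the generalized ant: at position `p` with direction `d` and state
function `σ`, the ant turns left (if the rule says `true` on the state of `p`) or
right, increments the state of `p`, and moves one step in the new direction.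
A configuration is `(position, direction, states)`. -/
def antStep {n : ℕ} (s : ZMod n → Bool) :
    (ℤ × ℤ) × (ℤ × ℤ) × ((ℤ × ℤ) → ZMod n) →
    (ℤ × ℤ) × (ℤ × ℤ) × ((ℤ × ℤ) → ZMod n) :=
  fun c =>
    let p := c.1
    let d := c.2.1
    let σ := c.2.2
    let d' := if s (σ p) then (-d.2, d.1) else (d.2, -d.1)
    (p + d', d', Function.update σ p (σ p + 1))

namespace AntAux

variable {n : ℕ} (s : ZMod n → Bool) (x : (ℤ × ℤ) × (ℤ × ℤ) × ((ℤ × ℤ) → ZMod n))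

def aP (t : ℕ) : ℤ × ℤ := ((antStep s)^[t] x).1
def aD (t : ℕ) : ℤ × ℤ := ((antStep s)^[t] x).2.1
def aS (t : ℕ) : (ℤ × ℤ) → ZMod n := ((antStep s)^[t] x).2.2

lemma aP_succ (t : ℕ) : aP s x (t+1) = aP s x t + aD s x (t+1) := by
  unfold aP aD
  rw [Function.iterate_succ_apply']
  rfl

lemma aD_succ_true (t : ℕ) (hb : s (aS s x t (aP s x t)) = true) :
    aD s x (t+1) = (-(aD s x t).2, (aD s x t).1) := by
  unfold aS aP at hb
  unfold aD
  rw [Function.iterate_succ_apply']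
  simp [antStep, hb]

lemma aD_succ_false (t : ℕ) (hb : s (aS s x t (aP s x t)) = false) :
    aD s x (t+1) = ((aD s x t).2, -(aD s x t).1) := by
  unfold aS aP at hb
  unfold aD
  rw [Function.iterate_succ_apply']
  simp [antStep, hb]

lemma aS_succ (t : ℕ) :
    aS s x (t+1) = Function.update (aS s x t) (aP s x t) (aS s x t (aP s x t) + 1) := by
  unfold aS aP
  rw [Function.iterate_succ_apply']
  rfl

end AntAux

/-- Fundamental Theorem of Myrmecology (Bunimovich–Troubetzkoy): for any `n ≥ 2`, any
non-constant rule-string `s : ZMod n → Bool`, any initial position, any initial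
direction among the four unit vectors, and any initial state function that is constant
outside a finite set, the set of cells visited by the ant is infinite. -/
theorem stmt_8 (n : ℕ) (hn : 2 ≤ n) (s : ZMod n → Bool)
    (hs : ∃ i j : ZMod n, s i ≠ s j)
    (p₀ d₀ : ℤ × ℤ) (σ₀ : (ℤ × ℤ) → ZMod n)
    (hd : d₀ ∈ ({(1, 0), (-1, 0), (0, 1), (0, -1)} : Set (ℤ × ℤ)))
    (hσ : ∃ c : ZMod n, {q : ℤ × ℤ | σ₀ q ≠ c}.Finite) :
    {q : ℤ × ℤ | ∃ t : ℕ, ((antStep s)^[t] (p₀, d₀, σ₀)).1 = q}.Infinite := by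

  classical
  obtain ⟨ib, jb, hij⟩ := hs
  have hvals : ∃ a b : ZMod n, s a = true ∧ s b = false := by
    cases hsi : s ib <;> cases hsj : s jb
    · simp [hsi, hsj] at hij
    · exact ⟨jb, ib, hsj, hsi⟩
    · exact ⟨ib, jb, hsi, hsj⟩
    · simp [hsi, hsj] at hij
  obtain ⟨ρT, ρF, hρT, hρF⟩ := hvals
  haveI : NeZero n := ⟨by omega⟩
  show Set.Infinite {q | ∃ t, AntAux.aP s (p₀, d₀, σ₀) t = q}
  by_contra hfin
  rw [Set.not_infinite] at hfin
  set x : (ℤ × ℤ) × (ℤ × ℤ) × ((ℤ × ℤ) → ZMod n) := (p₀, d₀, σ₀) with hxdef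
  set P : ℕ → ℤ × ℤ := AntAux.aP s x with hPdef
  set D : ℕ → ℤ × ℤ := AntAux.aD s x with hDdef
  set S : ℕ → (ℤ × ℤ) → ZMod n := AntAux.aS s x with hSdef
  have hP0 : P 0 = p₀ := rfl
  have hD0 : D 0 = d₀ := rfl
  have hS0 : S 0 = σ₀ := rfl
  have hPs : ∀ t, P (t+1) = P t + D (t+1) := fun t => AntAux.aP_succ s x t
  have hDtrue : ∀ t, s (S t (P t)) = true → D (t+1) = (-(D t).2, (D t).1) :=
    fun t hb => AntAux.aD_succ_true s x t hb
  have hDfalse : ∀ t, s (S t (P t)) = false → D (t+1) = ((D t).2, -(D t).1) :=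
    fun t hb => AntAux.aD_succ_false s x t hb
  have hSs : ∀ t, S (t+1) = Function.update (S t) (P t) (S t (P t) + 1) :=
    fun t => AntAux.aS_succ s x t
  -- directions are unit vectors
  have hD4 : ∀ t, D t = (1,0) ∨ D t = (-1,0) ∨ D t = (0,1) ∨ D t = (0,-1) := by
    intro t
    induction t with
    | zero => rw [hD0]; simpa using hd
    | succ t ih =>
      cases hb : s (S t (P t)) with
      | false => rcases ih with h|h|h|h <;> rw [hDfalse t hb, h] <;> norm_num
      | true => rcases ih with h|h|h|h <;> rw [hDtrue t hb, h] <;> norm_num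
  -- parity of position sum
  have hpar : ∀ t, (((P t).1 + (P t).2 : ℤ) : ZMod 2)
      = ((p₀.1 + p₀.2 : ℤ) : ZMod 2) + (t : ZMod 2) := by
    intro t
    induction t with
    | zero => simp [hP0]
    | succ t ih =>
      have hds : (((D (t+1)).1 + (D (t+1)).2 : ℤ) : ZMod 2) = 1 := by
        rcases hD4 (t+1) with h|h|h|h <;> rw [h] <;> push_cast <;> decide
      rw [hPs t]
      push_cast [Prod.fst_add, Prod.snd_add] at ih hds ⊢
      linear_combination ih + hds
  -- axis alternation
  have halt : ∀ t, ((D (t+1)).2 = 0 ↔ ¬ (D t).2 = 0) := by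
    intro t
    cases hb : s (S t (P t)) with
    | false => rcases hD4 t with h|h|h|h <;> rw [hDfalse t hb, h] <;> norm_num
    | true => rcases hD4 t with h|h|h|h <;> rw [hDtrue t hb, h] <;> norm_num
  have hax0 : ∀ t, ((D t).2 = 0 ↔ ((D 0).2 = 0 ↔ Even t)) := by
    intro t
    induction t with
    | zero => simp
    | succ t ih => rw [halt t, ih, Nat.even_add_one]; tauto
  have haxis : ∀ t u, P t = P u → ((D t).2 = 0 ↔ (D u).2 = 0) := by
    intro t u htu
    have h1 := hpar t
    have h2 := hpar u
    rw [htu] at h1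
    have h3 : ((t : ℕ) : ZMod 2) = ((u : ℕ) : ZMod 2) := add_left_cancel (h1.symm.trans h2)
    have h4 : Even t ↔ Even u := by
      rw [ZMod.natCast_eq_natCast_iff'] at h3
      rw [Nat.even_iff, Nat.even_iff, h3]
    rw [hax0 t, hax0 u, h4]
  -- state counting
  have hcnt : ∀ (M : ℤ × ℤ) (t : ℕ),
      S t M = σ₀ M + ((Nat.count (fun u => P u = M) t : ℕ) : ZMod n) := by
    intro M t
    induction t with
    | zero => simp [hS0]
    | succ t ih =>
      rw [hSs t, Nat.count_succ]
      by_cases hPM : P t = M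
      · rw [if_pos hPM, hPM, Function.update_self, ih]
        push_cast
        ring
      · rw [Function.update_of_ne (Ne.symm hPM), if_neg hPM, ih, add_zero]
  -- some cell is visited infinitely often
  have hIex : ∃ q : ℤ × ℤ, {t | P t = q}.Infinite := by
    by_contra h
    push_neg at h
    have h1 : (Set.univ : Set ℕ) ⊆ ⋃ q ∈ {q : ℤ × ℤ | ∃ t, P t = q}, {t | P t = q} :=
      fun t _ => Set.mem_biUnion ⟨t, rfl⟩ rfl
    exact Set.infinite_univ
      ((hfin.biUnion (fun q _ => h q)).subset h1)
  set I : Set (ℤ × ℤ) := {q | {t | P t = q}.Infinite} with hIdef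
  have hIsub : I ⊆ {q | ∃ t, P t = q} := by
    intro q hq
    obtain ⟨t, ht⟩ := Set.Infinite.nonempty hq
    exact ⟨t, ht⟩
  have hIfin : I.Finite := hfin.subset hIsub
  obtain ⟨q0, hq0⟩ := hIex
  set J := hIfin.toFinset with hJdef
  have hJne : J.Nonempty := ⟨q0, hIfin.mem_toFinset.mpr hq0⟩
  have hJne1 : (J.image Prod.fst).Nonempty := hJne.image _
  set m1 := (J.image Prod.fst).max' hJne1 with hm1
  have hm1mem : ∃ q ∈ J, q.1 = m1 := by
    have := (J.image Prod.fst).max'_mem hJne1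
    simpa using this
  set J2 := J.filter (fun q => q.1 = m1) with hJ2
  have hJ2ne : J2.Nonempty := by
    obtain ⟨q, hqJ, hq1⟩ := hm1mem
    exact ⟨q, Finset.mem_filter.mpr ⟨hqJ, hq1⟩⟩
  have hJ2ne2 : (J2.image Prod.snd).Nonempty := hJ2ne.image _
  set m2 := (J2.image Prod.snd).max' hJ2ne2 with hm2
  have hMI : ((m1, m2) : ℤ × ℤ) ∈ I := by
    have h := (J2.image Prod.snd).max'_mem hJ2ne2
    simp only [Finset.mem_image] at h
    obtain ⟨q, hqJ2, hq2⟩ := h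
    have hq' := Finset.mem_filter.mp hqJ2
    have hqe : q = (m1, m2) := Prod.ext hq'.2 hq2
    rw [← hqe]
    exact hIfin.mem_toFinset.mp hq'.1
  have hmax1 : ∀ q, q ∈ I → q.1 ≤ m1 := by
    intro q hq
    exact Finset.le_max' _ _ (Finset.mem_image_of_mem _ (hIfin.mem_toFinset.mpr hq))
  have hmax2 : ∀ q, q ∈ I → q.1 = m1 → q.2 ≤ m2 := by
    intro q hq h1
    exact Finset.le_max' _ _
      (Finset.mem_image_of_mem _ (Finset.mem_filter.mpr ⟨hIfin.mem_toFinset.mpr hq, h1⟩))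
  have hEfin : {t | P t = (m1 + 1, m2)}.Finite := by
    rw [← Set.not_infinite]
    intro h
    have := hmax1 (m1 + 1, m2) h
    omega
  have hNfin : {t | P t = (m1, m2 + 1)}.Finite := by
    rw [← Set.not_infinite]
    intro h
    have := hmax2 (m1, m2 + 1) h rfl
    omega
  have hMinf : {t | P t = (m1, m2)}.Infinite := hMI
  obtain ⟨t0, ht0⟩ := Set.Infinite.nonempty hMinf
  -- every residue occurs infinitely often as the state of M at a visit
  have hkey : ∀ ρ : ZMod n, {t | P t = (m1, m2) ∧ S t (m1, m2) = ρ}.Infinite := by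
    intro ρ
    have hne : (0:ℕ) < n := by omega
    apply Set.infinite_of_injective_forall_mem
      (f := fun j : ℕ => Nat.nth (fun u => P u = (m1, m2)) ((ρ - σ₀ (m1, m2)).val + n * j))
    · intro a b hab
      have h1 := Nat.nth_injective hMinf hab
      have h2 : n * a = n * b := by omega
      exact Nat.eq_of_mul_eq_mul_left hne h2
    · intro j
      refine ⟨Nat.nth_mem_of_infinite hMinf _, ?_⟩
      rw [hcnt, Nat.count_nth_of_infinite hMinf]
      have hcast : (((ρ - σ₀ (m1, m2)).val + n * j : ℕ) : ZMod n) = ρ - σ₀ (m1, m2) := by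
        rw [Nat.cast_add, Nat.cast_mul, ZMod.natCast_self, zero_mul, add_zero]
        exact ZMod.natCast_rightInverse _
      rw [hcast]
      ring
  by_cases hH : (D t0).2 = 0
  · -- horizontal case: pick visits with `s` true; ant then exits north
    have hbadfin : {t | P t = (m1, m2) ∧ D t = (-1, 0)}.Finite := by
      have hsub : {t | P t = (m1, m2) ∧ D t = (-1, 0)} ⊆
          insert 0 ((fun u => u + 1) '' {u | P u = (m1 + 1, m2)}) := by
        rintro t ⟨h1, h2⟩
        cases t with
        | zero => exact Set.mem_insert _ _
        | succ u =>
          refine Set.mem_insert_of_mem _ ⟨u, ?_, rfl⟩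
          have h3 := hPs u
          rw [h1, h2] at h3
          have h4 : P u = (m1, m2) - (-1, 0) := eq_sub_of_add_eq h3.symm
          show P u = (m1 + 1, m2)
          rw [h4]
          apply Prod.ext <;> norm_num
      exact ((hEfin.image _).insert 0).subset hsub
    have himg : {t | P t = (m1, m2 + 1)}.Infinite := by
      have hinj : Function.Injective (fun u : ℕ => u + 1) := fun a b hab => by simpa using hab
      have h1 := Set.Infinite.image (Function.Injective.injOn hinj)
        (((hkey ρT).diff hbadfin))
      apply h1.mono
      rintro t' ⟨t, ⟨⟨h1', h2'⟩, hnb⟩, rfl⟩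
      show P (t + 1) = (m1, m2 + 1)
      have hax : (D t).2 = 0 := (haxis t t0 (by rw [h1', ht0])).mpr hH
      have hDt : D t = (1, 0) := by
        rcases hD4 t with h|h|h|h
        · exact h
        · exact absurd ⟨h1', h⟩ hnb
        · rw [h] at hax; norm_num at hax
        · rw [h] at hax; norm_num at hax
      have hb : s (S t (P t)) = true := by rw [h1', h2']; exact hρT
      have hD1 : D (t+1) = (0, 1) := by rw [hDtrue t hb, hDt]; norm_num
      rw [hPs t, h1', hD1]
      apply Prod.ext <;> norm_num
    have := hmax2 (m1, m2 + 1) himg rfl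
    omega
  · -- vertical case: pick visits with `s` false; ant then exits east
    have hbadfin : {t | P t = (m1, m2) ∧ D t = (0, -1)}.Finite := by
      have hsub : {t | P t = (m1, m2) ∧ D t = (0, -1)} ⊆
          insert 0 ((fun u => u + 1) '' {u | P u = (m1, m2 + 1)}) := by
        rintro t ⟨h1, h2⟩
        cases t with
        | zero => exact Set.mem_insert _ _
        | succ u =>
          refine Set.mem_insert_of_mem _ ⟨u, ?_, rfl⟩
          have h3 := hPs u
          rw [h1, h2] at h3
          have h4 : P u = (m1, m2) - (0, -1) := eq_sub_of_add_eq h3.symm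
          show P u = (m1, m2 + 1)
          rw [h4]
          apply Prod.ext <;> norm_num
      exact ((hNfin.image _).insert 0).subset hsub
    have himg : {t | P t = (m1 + 1, m2)}.Infinite := by
      have hinj : Function.Injective (fun u : ℕ => u + 1) := fun a b hab => by simpa using hab
      have h1 := Set.Infinite.image (Function.Injective.injOn hinj)
        (((hkey ρF).diff hbadfin))
      apply h1.mono
      rintro t' ⟨t, ⟨⟨h1', h2'⟩, hnb⟩, rfl⟩
      show P (t + 1) = (m1 + 1, m2)
      have hax : ¬ (D t).2 = 0 := fun hc => hH ((haxis t t0 (by rw [h1', ht0])).mp hc)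
      have hDt : D t = (0, 1) := by
        rcases hD4 t with h|h|h|h
        · rw [h] at hax; norm_num at hax
        · rw [h] at hax; norm_num at hax
        · exact h
        · exact absurd ⟨h1', h⟩ hnb
      have hb : s (S t (P t)) = false := by rw [h1', h2']; exact hρF
      have hD1 : D (t+1) = (1, 0) := by rw [hDfalse t hb, hDt]; norm_num
      rw [hPs t, h1', hD1]
      apply Prod.ext <;> norm_num
    have := hmax1 (m1 + 1, m2) himg
    omega
end

section
/- Splitting a closed combinatorial curve at a twice-visited vertex: let C be a cyclic sequence of distinct directed arcs forming a closed curve that passes through a tile T exactly twice, using its two arcs a₁ and a₂. Replacing a₁ and a₂ by the two arcs a₁', a₂' of the switched tile (which reconnect the four endpoints the other way) splits C into exactly two disjoint closed curves, one containing the arcs of C strictly between a₁ and a₂, the other containing the remaining arcs. -/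
/-!
Write `σ = π * swap a₁ a₂`, let `N` be the length of the cycle `π` and `K < N` the index with
`π^K a₁ = a₂`. Away from `a₁, a₂` the permutations `σ` and `π` agree, while `σ a₂ = π a₁` and
`σ a₁ = π a₂`. Hence, starting from `a₂`, `σ` retraces the arc `π a₁, …, π^K a₁ = a₂` of the
original cycle and closes up there, and starting from `a₁` it retraces the complementary arc
`π a₂, …, π^(N-K) a₂ = a₁`. These two closed orbits are disjoint and together cover the cycle.
-/

namespace Equiv.Perm

variable {α : Type*}

theorem SameCycle.exists_pow_lt_of_pow_apply_eq_self [Finite α] {σ : Perm α} {b x : α} {k : ℕ}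
    (hk : 0 < k) (hb : (σ ^ k) b = b) (h : σ.SameCycle b x) : ∃ m < k, (σ ^ m) b = x := by
  obtain ⟨i, -, rfl⟩ := h.exists_pow_eq'
  have hper : Function.IsPeriodicPt σ k b := by
    rwa [Function.IsPeriodicPt, Function.IsFixedPt, iterate_eq_pow]
  exact ⟨i % k, Nat.mod_lt i hk, by simpa only [iterate_eq_pow] using hper.iterate_mod_apply i⟩

theorem IsCycleOn.pow_apply_ne_pow_apply_of_lt {f : Perm α} {s : Finset α} {a : α}
    (hf : f.IsCycleOn s) (ha : a ∈ s) {i j : ℕ} (hi : i < s.card) (hj : j < s.card)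
    (hij : i ≠ j) : (f ^ i) a ≠ (f ^ j) a := fun h =>
  hij (((hf.pow_apply_eq_pow_apply ha).mp h).eq_of_lt_of_lt hi hj)

variable [DecidableEq α] {π : Perm α} {a b : α} {k : ℕ}

theorem mul_swap_pow_apply_right
    (havoid : ∀ j, 0 < j → j < k → (π ^ j) a ≠ a ∧ (π ^ j) a ≠ b) :
    ∀ m, 0 < m → m ≤ k → ((π * swap a b) ^ m) b = (π ^ m) a := by
  intro m hm
  induction m, hm using Nat.le_induction with
  | base => simp
  | succ m hm ih =>
    intro hmk
    obtain ⟨hne_a, hne_b⟩ := havoid m hm (by omega)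
    rw [pow_succ', Perm.mul_apply, ih (by omega), Perm.mul_apply,
      swap_apply_of_ne_of_ne hne_a hne_b, pow_succ', Perm.mul_apply]

theorem sameCycle_mul_swap_right_iff [Finite α] (hk : 0 < k) (hab : (π ^ k) a = b)
    (havoid : ∀ j, 0 < j → j < k → (π ^ j) a ≠ a ∧ (π ^ j) a ≠ b) (x : α) :
    (π * swap a b).SameCycle b x ↔ ∃ m, 0 < m ∧ m ≤ k ∧ (π ^ m) a = x := by
  have hseg := mul_swap_pow_apply_right havoid
  constructor
  · intro h
    obtain ⟨m, hmk, rfl⟩ :=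
      h.exists_pow_lt_of_pow_apply_eq_self hk (by rw [hseg k hk le_rfl, hab])
    rcases Nat.eq_zero_or_pos m with rfl | hm
    · exact ⟨k, hk, le_rfl, by simpa using hab⟩
    · exact ⟨m, hm, hmk.le, (hseg m hm hmk.le).symm⟩
  · rintro ⟨m, hm, hmk, rfl⟩
    rw [← hseg m hm hmk]
    exact sameCycle_pow_right.mpr (SameCycle.refl _ _)

theorem IsCycleOn.sameCycle_mul_swap_right_iff [Finite α] {s : Finset α} (hc : π.IsCycleOn s)
    (ha : a ∈ s) (hk : 0 < k) (hks : k < s.card) (hab : (π ^ k) a = b) (x : α) :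
    (π * swap a b).SameCycle b x ↔ ∃ m, 0 < m ∧ m ≤ k ∧ (π ^ m) a = x :=
  Perm.sameCycle_mul_swap_right_iff hk hab (fun j hj hjk =>
    ⟨hc.pow_apply_ne_pow_apply_of_lt (j := 0) ha (by omega) (by omega) hj.ne',
      hab ▸ hc.pow_apply_ne_pow_apply_of_lt ha (by omega) hks hjk.ne⟩) x

end Equiv.Perm

theorem exists_pos_le_first_hit_iff {α : Type*} {f : ℕ → α} {b x : α} {K : ℕ} (hK0 : 0 < K)
    (hK : f K = b) (hmin : ∀ j, 0 < j → j < K → f j ≠ b) :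
    (∃ m, 0 < m ∧ m ≤ K ∧ f m = x) ↔
      x = b ∨ ∃ k, 0 < k ∧ f k = x ∧ ∀ m, 0 < m → m ≤ k → f m ≠ b := by
  constructor
  · rintro ⟨m, hm, hmK, rfl⟩
    rcases hmK.lt_or_eq with hmK | rfl
    · exact Or.inr ⟨m, hm, rfl, fun j hj hjm => hmin j hj (by omega)⟩
    · exact Or.inl hK
  · rintro (rfl | ⟨k, hk, rfl, hnot⟩)
    · exact ⟨K, hK0, le_rfl, hK⟩
    · refine ⟨k, hk, ?_, rfl⟩
      by_contra! hKk
      exact hnot K hK0 hKk.le hK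

open Equiv Equiv.Perm Finset in
/-- Splitting a closed combinatorial curve at a twice-visited tile.  A single closed
curve through all arcs is a cyclic permutation `π` of the (finite) set of arcs with
full support.  Switching the twice-visited tile re-pairs the four endpoints, which
amounts to replacing `π` by `π' = π * swap a₁ a₂` where `a₁, a₂` are the tile's two
arcs.  Then the curve splits into exactly two disjoint closed curves: `a₁` and `a₂`
lie on different cycles of `π'`, every arc lies on one of these two cycles, and the
cycle of `a₂` consists of `a₂` together with precisely the arcs of the original curve
strictly between `a₁` and `a₂`. -/
theorem stmt_17 {A : Type*} [Fintype A] [DecidableEq A]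
    (π : Equiv.Perm A) (hπ : π.IsCycle) (hsupp : π.support = Finset.univ)
    (a₁ a₂ : A) (hne : a₁ ≠ a₂) :
    ¬ (π * Equiv.swap a₁ a₂).SameCycle a₁ a₂ ∧
    (∀ x : A, (π * Equiv.swap a₁ a₂).SameCycle a₁ x ∨
      (π * Equiv.swap a₁ a₂).SameCycle a₂ x) ∧
    (∀ x : A, (π * Equiv.swap a₁ a₂).SameCycle a₂ x ↔
      (x = a₂ ∨ ∃ k : ℕ, 0 < k ∧ (π ^ k) a₁ = x ∧
        ∀ m : ℕ, 0 < m → m ≤ k → (π ^ m) a₁ ≠ a₂)) := by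
  have hc : π.IsCycleOn (univ : Finset A) := by
    simpa [← hsupp, coe_support_eq_set_support] using hπ.isCycleOn
  set N := (univ : Finset A).card
  have hinj {i j : ℕ} := hc.pow_apply_ne_pow_apply_of_lt (mem_univ a₁) (i := i) (j := j)
  obtain ⟨K, hKN, hK⟩ := hc.exists_pow_eq (mem_univ a₁) (mem_univ a₂)
  have hK0 : 0 < K := Nat.pos_of_ne_zero (by rintro rfl; exact hne hK)
  have hshift (m : ℕ) : (π ^ m) a₂ = (π ^ (m + K)) a₁ := by rw [← hK, pow_add, Perm.mul_apply]
  have hcyc₂ := hc.sameCycle_mul_swap_right_iff (mem_univ a₁) hK0 hKN hK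
  have hcyc₁ := hc.sameCycle_mul_swap_right_iff (mem_univ a₂) (k := N - K) (by omega) (by omega)
    (by rw [hshift, Nat.sub_add_cancel hKN.le, hc.pow_card_apply (mem_univ a₁)])
  rw [swap_comm] at hcyc₁
  refine ⟨?_, fun x => ?_, fun x => ?_⟩
  · rw [sameCycle_comm, hcyc₂]
    rintro ⟨m, hm, hmK, hma⟩
    exact hinj (j := 0) (by omega) (by omega) hm.ne' hma
  · obtain ⟨j, hjN, rfl⟩ := hc.exists_pow_eq (mem_univ a₁) (mem_univ x)
    rcases Nat.eq_zero_or_pos j with rfl | hj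
    · exact Or.inl (by rw [pow_zero, Perm.one_apply])
    rcases le_or_gt j K with hjK | hKj
    · exact Or.inr ((hcyc₂ _).mpr ⟨j, hj, hjK, rfl⟩)
    · refine Or.inl ((hcyc₁ _).mpr ⟨j - K, by omega, by omega, ?_⟩)
      rw [hshift, Nat.sub_add_cancel hKj.le]
  · rw [hcyc₂]
    exact exists_pos_le_first_hit_iff (f := fun m => (π ^ m) a₁) hK0 hK
      fun j _ hjK => hK ▸ hinj (by omega) hKN hjK.ne
end
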